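/- Let G be a finite group. Then |G| times the trivial character of G is an integral linear combination of characters induced from cyclic subgroups of G; that is, there exist virtual characters χ_S ∈ R(S), one for each cyclic subgroup S of G, such that |G|·1_G = Σ_S Ind_S^G χ_S in the representation ring R(G). -/
import Mathlib


open scoped Classical

/-- The function obtained by inducing a class function `f` on a subgroup `S` up to `G`,
via the standard formula `(Ind_S^G f)(g) = |S|⁻¹ Σ_{x ∈ G, x⁻¹gx ∈ S} f(x⁻¹gx)`. -/
noncomputable def inducedFun {G : Type*} [Group G] [Fintype G] (S : Subgroup G)
    (f : S → ℂ) (g : G) : ℂ :=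
  (Nat.card S : ℂ)⁻¹ *
    ∑ x : G, if h : x⁻¹ * g * x ∈ S then f ⟨x⁻¹ * g * x, h⟩ else 0

/-- A function `S → ℂ` is a virtual character if it lies in the additive subgroup
generated by characters of finite-dimensional complex representations of `S`. -/
def IsVirtualChar {S : Type} [Group S] (f : S → ℂ) : Prop :=
  f ∈ AddSubgroup.closure {f : S → ℂ | ∃ V : FDRep ℂ S, f = V.character}

noncomputable instance subgroupFintype (G : Type) [Group G] [Fintype G] :
    Fintype (Subgroup G) :=
  haveI : Finite (Subgroup G) :=
    Finite.of_injective (fun H : Subgroup G => (H : Set G)) SetLike.coe_injective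
  Fintype.ofFinite _

lemma card_lt_of_lt {G : Type} [Group G] [Fintype G] {D D' : Subgroup G} (h : D < D') :
    Nat.card D < Nat.card D' := by
  have h' := Set.ncard_lt_ncard (SetLike.coe_ssubset_coe.mpr h) (Set.toFinite (D' : Set G))
  rw [← Nat.card_coe_set_eq, ← Nat.card_coe_set_eq] at h'
  exact h'

/-- The integer coefficients for Artin induction, defined by downward recursion on the
lattice of subgroups: `a(D) = 1 - Σ_{D' ⊋ D cyclic} a(D')`, so that for every cyclic `M`,
`Σ_{cyclic D ⊇ M} a(D) = 1`. -/
noncomputable def artinCoeff (G : Type) [Group G] [Fintype G] (D : Subgroup G) : ℤ :=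
  1 - ∑ D' ∈ (Finset.univ.filter (fun D' : Subgroup G => IsCyclic D' ∧ D < D')).attach,
        artinCoeff G D'.1
termination_by Fintype.card G - Nat.card D
decreasing_by
  have h1 : D < D'.1 := (Finset.mem_filter.mp D'.2).2.2
  have h2 := card_lt_of_lt h1
  have h3 : Nat.card D'.1 ≤ Fintype.card G := by
    simpa [Nat.card_eq_fintype_card] using Subgroup.card_le_card_group D'.1
  omega

lemma artinCoeff_def (G : Type) [Group G] [Fintype G] (D : Subgroup G) :
    artinCoeff G D =
      1 - ∑ D' ∈ Finset.univ.filter (fun D' : Subgroup G => IsCyclic D' ∧ D < D'),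
            artinCoeff G D' := by
  rw [artinCoeff, Finset.sum_attach]

instance zpowers_isCyclic {G : Type} [Group G] (g : G) : IsCyclic (Subgroup.zpowers g) := by
  constructor
  refine ⟨⟨g, Subgroup.mem_zpowers g⟩, ?_⟩
  rintro ⟨x, k, rfl⟩
  exact ⟨k, by ext; simp⟩

lemma sum_artinCoeff (G : Type) [Group G] [Fintype G] (z : G) :
    ∑ D ∈ Finset.univ.filter (fun D : Subgroup G => IsCyclic D),
      (if z ∈ D then artinCoeff G D else 0) = 1 := by
  classical
  set M := Subgroup.zpowers z with hM
  have key : ∀ D : Subgroup G, (IsCyclic D ∧ z ∈ D) ↔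
      (D = M ∨ (IsCyclic D ∧ M < D)) := by
    intro D
    constructor
    · rintro ⟨hc, hz⟩
      rcases lt_or_eq_of_le (Subgroup.zpowers_le.mpr hz) with h | h
      · exact Or.inr ⟨hc, h⟩
      · exact Or.inl h.symm
    · rintro (rfl | ⟨hc, hlt⟩)
      · exact ⟨zpowers_isCyclic z, Subgroup.mem_zpowers z⟩
      · exact ⟨hc, Subgroup.zpowers_le.mp hlt.le⟩
  have h1 : ∑ D ∈ Finset.univ.filter (fun D : Subgroup G => IsCyclic D),
      (if z ∈ D then artinCoeff G D else 0)
      = ∑ D ∈ Finset.univ.filter (fun D : Subgroup G => IsCyclic D ∧ z ∈ D),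
          artinCoeff G D := by
    rw [Finset.sum_filter, Finset.sum_filter]
    apply Finset.sum_congr rfl
    intro D _
    by_cases h : IsCyclic D <;> by_cases h' : z ∈ D <;> simp [h, h']
  rw [h1]
  have h2 : Finset.univ.filter (fun D : Subgroup G => IsCyclic D ∧ z ∈ D)
      = insert M (Finset.univ.filter (fun D : Subgroup G => IsCyclic D ∧ M < D)) := by
    ext D
    simp only [Finset.mem_filter, Finset.mem_univ, true_and, Finset.mem_insert]
    exact key D
  rw [h2, Finset.sum_insert (by simp), artinCoeff_def]
  ring

lemma isVirtualChar_const_int (S : Type) [Group S] (m : ℤ) :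
    IsVirtualChar (fun _ : S => (m : ℂ)) := by
  have h1 : (fun _ : S => (1 : ℂ)) ∈
      {f : S → ℂ | ∃ V : FDRep ℂ S, f = V.character} := by
    refine ⟨FDRep.of (Representation.trivial ℂ (G := S) (V := ℂ)), ?_⟩
    funext s
    show (1 : ℂ) = LinearMap.trace ℂ ℂ LinearMap.id
    rw [LinearMap.trace_id]
    simp
  have h2 := AddSubgroup.zsmul_mem _ (AddSubgroup.subset_closure h1) m
  have h3 : m • (fun _ : S => (1 : ℂ)) = fun _ : S => (m : ℂ) := by
    funext s; simp
  rwa [h3] at h2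

/-- Artin's induction theorem for the trivial character:
`|G|` times the trivial character of a finite group `G` is an integral linear
combination of characters induced from cyclic subgroups of `G`. -/
theorem artin_induction_trivial_character (G : Type) [Group G] [Fintype G] :
    ∃ (n : ℕ) (S : Fin n → Subgroup G) (χ : ∀ i, ((S i) → ℂ)),
      (∀ i, IsCyclic (S i)) ∧ (∀ i, IsVirtualChar (χ i)) ∧
      ∀ g : G, (Fintype.card G : ℂ) = ∑ i, inducedFun (S i) (χ i) g := by
  classical
  set I := {D : Subgroup G // IsCyclic D} with hI
  let e : I ≃ Fin (Fintype.card I) := Fintype.equivFin I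
  refine ⟨Fintype.card I, fun i => (e.symm i).1,
    fun i => fun _ => ((artinCoeff G (e.symm i).1 * (Nat.card (e.symm i).1 : ℤ) : ℤ) : ℂ),
    fun i => (e.symm i).2, fun i => isVirtualChar_const_int _ _, ?_⟩
  intro g
  have hF : ∀ D : I, inducedFun D.1
      (fun _ => ((artinCoeff G D.1 * (Nat.card D.1 : ℤ) : ℤ) : ℂ)) g
      = ∑ x : G, (if x⁻¹ * g * x ∈ D.1 then (artinCoeff G D.1 : ℂ) else 0) := by
    intro D
    have hcard : ((Nat.card D.1 : ℂ)) ≠ 0 :=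
      Nat.cast_ne_zero.mpr (Nat.card_pos (α := D.1)).ne'
    rw [inducedFun, Finset.mul_sum]
    apply Finset.sum_congr rfl
    intro x _
    by_cases h : x⁻¹ * g * x ∈ D.1
    · simp only [h, dif_pos, if_pos]
      push_cast
      field_simp
    · simp [h]
  calc (Fintype.card G : ℂ)
      = ∑ x : G, (1 : ℂ) := by simp
    _ = ∑ x : G, ∑ D : I, (if x⁻¹ * g * x ∈ D.1 then (artinCoeff G D.1 : ℂ) else 0) := by
        apply Finset.sum_congr rfl
        intro x _
        have hz := sum_artinCoeff G (x⁻¹ * g * x)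
        have hsub : ∑ D : I, (if x⁻¹ * g * x ∈ D.1 then (artinCoeff G D.1 : ℂ) else 0)
            = ∑ D ∈ Finset.univ.filter (fun D : Subgroup G => IsCyclic D),
                (if x⁻¹ * g * x ∈ D then (artinCoeff G D : ℂ) else 0) := by
          rw [Finset.sum_subtype (p := fun D : Subgroup G => IsCyclic D)
            (Finset.univ.filter (fun D : Subgroup G => IsCyclic D))
            (by simp) (fun D => if x⁻¹ * g * x ∈ D then (artinCoeff G D : ℂ) else 0)]
        rw [hsub]
        rw [show ∑ D ∈ Finset.univ.filter (fun D : Subgroup G => IsCyclic D),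
            (if x⁻¹ * g * x ∈ D then (artinCoeff G D : ℂ) else 0)
            = ((∑ D ∈ Finset.univ.filter (fun D : Subgroup G => IsCyclic D),
                (if x⁻¹ * g * x ∈ D then artinCoeff G D else 0) : ℤ) : ℂ) by
          push_cast [apply_ite (fun r : ℤ => (r : ℂ))]
          rfl]
        rw [hz]
        norm_num
    _ = ∑ D : I, ∑ x : G, (if x⁻¹ * g * x ∈ D.1 then (artinCoeff G D.1 : ℂ) else 0) :=
        Finset.sum_comm
    _ = ∑ D : I, inducedFun D.1
          (fun _ => ((artinCoeff G D.1 * (Nat.card D.1 : ℤ) : ℤ) : ℂ)) g := by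
        exact Finset.sum_congr rfl fun D _ => (hF D).symm
    _ = ∑ i : Fin (Fintype.card I), inducedFun (e.symm i).1
          (fun _ => ((artinCoeff G (e.symm i).1 * (Nat.card (e.symm i).1 : ℤ) : ℤ) : ℂ)) g := by
        rw [← Equiv.sum_comp e.symm]
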